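/- arXiv:1605.07524 — 3 statements merged into one kernel-verified Lean document; each statement's English description precedes it below -/
import Mathlib

section
/- Maximality of I: every isolatable subset Q of P is contained in I := P \ S. Equivalently, no node having a path of stealth connections to a node outside P can belong to any isolatable subset of P. -/
/-- Maximality of `I`: every isolatable subset `Q` of `P` is
contained in `I := P \ S`. -/
theorem isolatable_subset_I {V : Type*} (G H : SimpleGraph V) (hHG : H ≤ G) (P : Set V)
    (S : Set V) (hS : S = {v ∈ P | ∃ u ∉ P, H.Reachable v u})
    (I : Set V) (hI : I = P \ S)
    (Q : Set V) (hQP : Q ⊆ P)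
    (hQiso : ∀ v ∈ Q, ∀ u ∉ Q, ¬ H.Adj v u) :
    Q ⊆ I := by
  have key : ∀ v u, H.Reachable v u → v ∈ Q → u ∈ Q := by
    intro v u hr
    obtain ⟨w⟩ := hr
    induction w with
    | nil => exact id
    | cons h _ ih =>
      intro hv
      refine ih ?_
      by_contra hb
      exact hQiso _ hv _ hb h
  intro v hv
  rw [hI, hS]
  refine ⟨hQP hv, fun hs => ?_⟩
  obtain ⟨_, u, huP, hr⟩ := hs
  exact huP (hQP (key v u hr hv))
end

section
/- Main theorem (existence and uniqueness of the maximal isolatable subset): given a set P of nodes to disconnect from the Bitcoin network, there exists a unique maximal subset of P that can be isolated, namely I := P \ S; that is, I is isolatable, every isolatable subset Q ⊆ P satisfies Q ⊆ I, and consequently any isolatable subset of P that contains I equals I. -/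
lemma closed_reachable {V : Type*} (H : SimpleGraph V) (Q : Set V)
    (hQ : ∀ v ∈ Q, ∀ u ∉ Q, ¬ H.Adj v u) {v u : V} (hv : v ∈ Q)
    (h : H.Reachable v u) : u ∈ Q := by
  obtain ⟨w⟩ := h
  induction w with
  | nil => exact hv
  | cons h p ih =>
    apply ih
    by_contra hb
    exact hQ _ hv _ hb h

/-- Main theorem: `I := P \ S` is the unique maximal isolatable
subset of `P`: `I ⊆ P` is isolatable, every isolatable subset `Q ⊆ P` satisfies
`Q ⊆ I`, and any isolatable subset of `P` containing `I` equals `I`. -/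
theorem maximal_isolatable {V : Type*} (G H : SimpleGraph V) (hHG : H ≤ G) (P : Set V)
    (S : Set V) (hS : S = {v ∈ P | ∃ u ∉ P, H.Reachable v u})
    (I : Set V) (hI : I = P \ S) :
    (I ⊆ P ∧ ∀ v ∈ I, ∀ u ∉ I, ¬ H.Adj v u) ∧
    (∀ Q : Set V, Q ⊆ P → (∀ v ∈ Q, ∀ u ∉ Q, ¬ H.Adj v u) → Q ⊆ I) ∧
    (∀ Q : Set V, Q ⊆ P → (∀ v ∈ Q, ∀ u ∉ Q, ¬ H.Adj v u) → I ⊆ Q → Q = I) := by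
  subst hS hI
  have hmax : ∀ Q : Set V, Q ⊆ P → (∀ v ∈ Q, ∀ u ∉ Q, ¬ H.Adj v u) →
      Q ⊆ P \ {v ∈ P | ∃ u ∉ P, H.Reachable v u} := by
    intro Q hQP hQ v hv
    refine ⟨hQP hv, ?_⟩
    rintro ⟨-, u, huP, hr⟩
    exact huP (hQP (closed_reachable H Q hQ hv hr))
  refine ⟨⟨fun v hv => hv.1, ?_⟩, hmax, ?_⟩
  · rintro v ⟨hvP, hvS⟩ u hu hadj
    by_cases huP : u ∈ P
    · exact hu ⟨huP, fun h => hvS ⟨hvP, h.2.imp fun w hw =>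
        ⟨hw.1, (hadj.reachable).trans hw.2⟩⟩⟩
    · exact hvS ⟨hvP, u, huP, hadj.reachable⟩
  · intro Q hQP hQ hIQ
    exact Set.Subset.antisymm (hmax Q hQP hQ) hIQ
end

section
/- Isolation after the cut: let G' be the simple graph on V whose edges are exactly those edges {v, u} of G such that H.Adj v u, or v and u both lie in I := P \ S, or v and u both lie outside I (i.e., G' is G with every vulnerable edge crossing the boundary of I deleted). Then no node of I is reachable in G' from any node outside I: for all v ∈ I and u ∉ I, ¬ G'.Reachable u v. -/
/-- Isolation after the cut: if `G'` is `G` with every vulnerable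
edge crossing the boundary of `I := P \ S` deleted, then no node of `I` is
reachable in `G'` from any node outside `I`. -/
theorem isolated_after_cut {V : Type*} (G H : SimpleGraph V) (hHG : H ≤ G) (P : Set V)
    (S : Set V) (hS : S = {v ∈ P | ∃ u ∉ P, H.Reachable v u})
    (I : Set V) (hI : I = P \ S)
    (G' : SimpleGraph V)
    (hG' : ∀ v u, G'.Adj v u ↔
      G.Adj v u ∧ (H.Adj v u ∨ (v ∈ I ∧ u ∈ I) ∨ (v ∉ I ∧ u ∉ I))) :
    ∀ v ∈ I, ∀ u ∉ I, ¬ G'.Reachable u v := by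
  -- Key: H-neighbors of I stay in I
  have hHclose : ∀ a b, H.Adj a b → b ∈ I → a ∈ I := by
    intro a b hab hb
    rw [hI] at hb ⊢
    obtain ⟨hbP, hbS⟩ := hb
    have haP : a ∈ P := by
      by_contra haP
      exact hbS (hS ▸ ⟨hbP, a, haP, hab.symm.reachable⟩)
    refine ⟨haP, fun haS => ?_⟩
    rw [hS] at haS
    obtain ⟨-, u, huP, hr⟩ := haS
    exact hbS (hS ▸ ⟨hbP, u, huP, hab.symm.reachable.trans hr⟩)
  have hstep : ∀ a b, G'.Adj a b → b ∈ I → a ∈ I := by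
    intro a b hab hb
    rcases (hG' a b).mp hab with ⟨-, hH | ⟨ha, _⟩ | ⟨-, hbn⟩⟩
    · exact hHclose a b hH hb
    · exact ha
    · exact absurd hb hbn
  have hwalk : ∀ (a b : V) (_ : G'.Walk a b), b ∈ I → a ∈ I := by
    intro a b w
    induction w with
    | nil => exact id
    | cons hab _ ih => exact fun hb => hstep _ _ hab (ih hb)
  intro v hv u hu hr
  obtain ⟨w⟩ := hr
  exact hu (hwalk u v w hv)
end
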